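/- For every odd prime p, if K(p) ≢ 0 (mod p) and p | K(n) implies n < p, then there exist infinitely many primes q such that q | K(n) for some n > 3 (i.e., there are infinitely many Kurepa primes). -/

import Mathlib

/-- Kurepa's left factorial. -/
def K (n : ℕ) : ℕ := ∑ k ∈ Finset.range n, k.factorial

/-!
For `n ≥ 4` all terms `k!` with `k ≥ 4` are divisible by `4`, so `K n ≡ K 4 = 10 ≡ 2 (mod 4)`.
Hence `K n / 2` is odd and larger than `1`, and `K n` has an odd prime divisor `q`; by hypothesis
`n < q`. Letting `n` grow produces arbitrarily large such primes.
-/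

lemma K_succ (n : ℕ) : K (n + 1) = K n + n.factorial := Finset.sum_range_succ _ _

lemma K_mono : Monotone K :=
  monotone_nat_of_le_succ fun n => by rw [K_succ]; exact Nat.le_add_right _ _

lemma K_mod_four {n : ℕ} (hn : 4 ≤ n) : K n % 4 = 2 := by
  induction n, hn using Nat.le_induction with
  | base => decide
  | succ n hn ih =>
    obtain ⟨c, hc⟩ : 4 ∣ n.factorial := Nat.dvd_factorial (by norm_num) hn
    rw [K_succ, hc]
    omega

lemma exists_odd_prime_dvd_of_mod_four_eq_two {m : ℕ} (hm : m % 4 = 2) (h2 : m ≠ 2) :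
    ∃ q, q.Prime ∧ Odd q ∧ q ∣ m := by
  obtain ⟨d, rfl⟩ : 2 ∣ m := by omega
  have hd : Odd d := Nat.odd_iff.mpr (by omega)
  have hd1 : d ≠ 1 := by omega
  exact ⟨d.minFac, Nat.minFac_prime hd1, hd.of_dvd_nat (Nat.minFac_dvd d),
    (Nat.minFac_dvd d).mul_left 2⟩

lemma exists_odd_prime_dvd_K {n : ℕ} (hn : 4 ≤ n) : ∃ q, q.Prime ∧ Odd q ∧ q ∣ K n := by
  have hK : 10 ≤ K n := le_of_eq_of_le (by decide) (K_mono hn)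
  exact exists_odd_prime_dvd_of_mod_four_eq_two (K_mod_four hn) (by omega)

theorem infinitely_many_kurepa_primes
    (h : ∀ p : ℕ, p.Prime → Odd p → ¬ p ∣ K p ∧ ∀ n, p ∣ K n → n < p) :
    {q : ℕ | q.Prime ∧ ∃ n, 3 < n ∧ q ∣ K n}.Infinite := by
  refine Set.infinite_of_forall_exists_gt fun a => ?_
  obtain ⟨q, hq, hq_odd, hq_dvd⟩ := exists_odd_prime_dvd_K (Nat.le_add_left 4 a)
  have hlt : a + 4 < q := (h q hq hq_odd).2 _ hq_dvd
  exact ⟨q, ⟨hq, a + 4, by omega, hq_dvd⟩, by omega⟩
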